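/- Lifting trap spaces to the perturbed encoding: given a perturbation σ : X → {0,1,⋆} and a trap space m of the perturbed network f^σ, the subspace m' on the variables of g defined by m'(v) = m(v) for v ∈ V, m'(v^k) = 1, m'(v^o) = 0 when σ(v) = 0; m'(v^k) = 0, m'(v^o) = 1 when σ(v) = 1; and m'(v^k) = 0, m'(v^o) = 0 when σ(v) = ⋆, is a trap space of the perturbation-encoding network g. -/

import Mathlib

/-- A state `s` belongs to the subspace `m` (none = free/⋆). -/
def inSub {V : Type*} (m : V → Option Bool) (s : V → Bool) : Prop :=
  ∀ v b, m v = some b → s v = b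

/-- The synchronous update of a Boolean network. -/
def syncUpdate {V : Type*} (f : V → (V → Bool) → Bool) (s : V → Bool) : V → Bool :=
  fun v => f v s

/-- `m` is a trap space: `S[m]` is closed under the synchronous update. -/
def IsTrapSpace {V : Type*} (f : V → (V → Bool) → Bool) (m : V → Option Bool) : Prop :=
  ∀ s, inSub m s → inSub m (syncUpdate f s)

/-- Boolean expressions over a variable set `V`. -/
inductive BExpr (V : Type*) where
  | const : Bool → BExpr V
  | var : V → BExpr V
  | not : BExpr V → BExpr V
  | and : BExpr V → BExpr V → BExpr V
  | or : BExpr V → BExpr V → BExpr V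

/-- Two-valued evaluation of a Boolean expression at a state. -/
def BExpr.eval {V : Type*} : BExpr V → (V → Bool) → Bool
  | .const b, _ => b
  | .var v, s => s v
  | .not e, s => !(e.eval s)
  | .and e₁ e₂, s => e₁.eval s && e₂.eval s
  | .or e₁ e₂, s => e₁.eval s || e₂.eval s

/-- Minimum w.r.t. the total order 0 <_t ⋆ <_t 1 (⋆ = none). -/
def tmin : Option Bool → Option Bool → Option Bool
  | some false, _ => some false
  | _, some false => some false
  | some true, y => y
  | x, some true => x
  | none, none => none

/-- Maximum w.r.t. the total order 0 <_t ⋆ <_t 1 (⋆ = none). -/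
def tmax : Option Bool → Option Bool → Option Bool
  | some true, _ => some true
  | _, some true => some true
  | some false, y => y
  | x, some false => x
  | none, none => none

/-- Kleene three-valued evaluation of a Boolean expression under a subspace. -/
def BExpr.keval {V : Type*} : BExpr V → (V → Option Bool) → Option Bool
  | .const b, _ => some b
  | .var v, m => m v
  | .not e, m => (e.keval m).map (fun b => !b)
  | .and e₁ e₂, m => tmin (e₁.keval m) (e₂.keval m)
  | .or e₁ e₂, m => tmax (e₁.keval m) (e₂.keval m)

/-- The partial order ≤_s on {0,1,⋆}: x ≤_s y iff x = y or y = ⋆. -/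
def leS (x y : Option Bool) : Prop := x = y ∨ y = none

/-- Trap space via the three-valued characterization: m(f_v) ≤_s m(v) for all v. -/
def IsTrapK {V : Type*} (f : V → BExpr V) (m : V → Option Bool) : Prop :=
  ∀ v, leS ((f v).keval m) (m v)

/-- ≤_s-minimal trap space (three-valued characterization). -/
def IsMinTrapK {V : Type*} (f : V → BExpr V) (m : V → Option Bool) : Prop :=
  IsTrapK f m ∧ ∀ m', IsTrapK f m' → (∀ v, leS (m' v) (m v)) → m' = m

/-- Renaming of variables in a Boolean expression. -/
def BExpr.map {V W : Type*} (φ : V → W) : BExpr V → BExpr W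
  | .const b => .const b
  | .var v => .var (φ v)
  | .not e => .not (e.map φ)
  | .and e₁ e₂ => .and (e₁.map φ) (e₂.map φ)
  | .or e₁ e₂ => .or (e₁.map φ) (e₂.map φ)

/-- Variables of the perturbation-encoding network: original variables plus,
for each perturbable `v ∈ X`, variables `v^k = inr (v, true)` and `v^o = inr (v, false)`. -/
abbrev PVar (V : Type) (X : Finset V) := V ⊕ ({v : V // v ∈ X} × Bool)

/-- The perturbation-encoding network `g` of `f` w.r.t. perturbable set `X`:
`g_{v^k} = v^k`, `g_{v^o} = v^o ∧ ¬v^k`, `g_v = ¬v^k ∧ (v^o ∨ f_v)` for `v ∈ X`,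
and `g_u = f_u` otherwise. -/
def pertEnc {V : Type} [DecidableEq V] (f : V → BExpr V) (X : Finset V) :
    PVar V X → BExpr (PVar V X)
  | .inl v =>
      if h : v ∈ X then
        .and (.not (.var (.inr (⟨v, h⟩, true))))
          (.or (.var (.inr (⟨v, h⟩, false))) ((f v).map .inl))
      else (f v).map .inl
  | .inr (x, true) => .var (.inr (x, true))
  | .inr (x, false) => .and (.var (.inr (x, false))) (.not (.var (.inr (x, true))))

/-- The perturbed network `f^σ`: perturbed variables get the constant `σ(v)`,
unperturbed ones (σ(v) = ⋆) keep `f_v`. -/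
def pertNet {V : Type} [DecidableEq V] (f : V → BExpr V) (X : Finset V)
    (σ : {v : V // v ∈ X} → Option Bool) : V → BExpr V := fun v =>
  if h : v ∈ X then
    match σ ⟨v, h⟩ with
    | some b => .const b
    | none => f v
  else f v

/-- Decode the perturbation from the values of `v^k` and `v^o`:
σ(v) = 1 iff (k,o) = (0,1); σ(v) = 0 iff (k,o) = (1,0); σ(v) = ⋆ iff (k,o) = (0,0). -/
def decodePert (k o : Option Bool) : Option Bool :=
  if k = some false ∧ o = some true then some true
  else if k = some true ∧ o = some false then some false
  else none

/-- The lifted subspace: `m` on the original variables, and on the encoding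
variables the values encoding the perturbation `σ`:
(k,o) = (1,0) if σ(v)=0, (0,1) if σ(v)=1, (0,0) if σ(v)=⋆. -/
def liftSub {V : Type} (X : Finset V) (σ : {v : V // v ∈ X} → Option Bool)
    (m : V → Option Bool) : PVar V X → Option Bool
  | .inl v => m v
  | .inr (x, true) => some (decide (σ x = some false))
  | .inr (x, false) => some (decide (σ x = some true))

@[simp]
theorem tmin_some_true_left (y : Option Bool) : tmin (some true) y = y := by
  rcases y with _ | _ | _ <;> rfl

@[simp]
theorem tmin_some_false_left (y : Option Bool) : tmin (some false) y = some false := rfl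

@[simp]
theorem tmax_some_true_left (y : Option Bool) : tmax (some true) y = some true := rfl

@[simp]
theorem tmax_some_false_left (y : Option Bool) : tmax (some false) y = y := by
  rcases y with _ | _ | _ <;> rfl

theorem leS_refl (x : Option Bool) : leS x x := Or.inl rfl

theorem BExpr.keval_map {V W : Type*} (φ : V → W) (e : BExpr V) (m : W → Option Bool) :
    (e.map φ).keval m = e.keval (m ∘ φ) := by
  induction e with
  | const b => rfl
  | var v => rfl
  | not e ih => simp only [BExpr.map, BExpr.keval, ih]
  | and e₁ e₂ ih₁ ih₂ => simp only [BExpr.map, BExpr.keval, ih₁, ih₂]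
  | or e₁ e₂ ih₁ ih₂ => simp only [BExpr.map, BExpr.keval, ih₁, ih₂]

theorem liftSub_comp_inl {V : Type} (X : Finset V) (σ : {v : V // v ∈ X} → Option Bool)
    (m : V → Option Bool) : liftSub X σ m ∘ Sum.inl = m := rfl

section LiftSub

variable {V : Type} [DecidableEq V] (f : V → BExpr V) (X : Finset V)
  (σ : {v : V // v ∈ X} → Option Bool) (m : V → Option Bool)

/-- On an original variable, the encoding evaluated at the lifted subspace behaves as the
perturbed network: `v^k = 1` forces `0`, `v^o = 1` forces `1`, and `(0,0)` leaves `f_v`. -/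
theorem keval_pertEnc_inl_liftSub (v : V) :
    (pertEnc f X (.inl v)).keval (liftSub X σ m) = (pertNet f X σ v).keval m := by
  by_cases hv : v ∈ X
  · simp only [pertEnc, pertNet, dif_pos hv, BExpr.keval, BExpr.keval_map, liftSub_comp_inl]
    rcases hσ : σ ⟨v, hv⟩ with _ | _ | _ <;> simp [liftSub, BExpr.keval, hσ]
  · simp only [pertEnc, pertNet, dif_neg hv, BExpr.keval_map, liftSub_comp_inl]

theorem keval_pertEnc_inr_liftSub (p : {v : V // v ∈ X} × Bool) :
    (pertEnc f X (.inr p)).keval (liftSub X σ m) = liftSub X σ m (.inr p) := by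
  obtain ⟨x, _ | _⟩ := p
  · simp only [pertEnc, BExpr.keval, liftSub]
    rcases σ x with _ | _ | _ <;> simp
  · rfl

end LiftSub

theorem trap_space_lifting_general {V : Type} [DecidableEq V]
    (f : V → BExpr V) (X : Finset V) (σ : {v : V // v ∈ X} → Option Bool)
    (m : V → Option Bool) (hm : IsTrapK (pertNet f X σ) m) :
    IsTrapK (pertEnc f X) (liftSub X σ m) := by
  rintro (v | p)
  · rw [keval_pertEnc_inl_liftSub]
    exact hm v
  · rw [keval_pertEnc_inr_liftSub]
    exact leS_refl _

/-- Lifting trap spaces to the perturbed encoding: if `m` is a trap space of the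
perturbed network `f^σ`, then the lifted subspace is a trap space of `g`. -/
theorem trap_space_lifting {V : Type} [Fintype V] [DecidableEq V]
    (f : V → BExpr V) (X : Finset V) (σ : {v : V // v ∈ X} → Option Bool)
    (m : V → Option Bool) (hm : IsTrapK (pertNet f X σ) m) :
    IsTrapK (pertEnc f X) (liftSub X σ m) :=
  trap_space_lifting_general f X σ m hm
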